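/- Suppose f is real-valued and integrable on ℝⁿ with ∫_{ℝⁿ} f(y) dy > 0, and g has a positive and finite limit at infinity, g(∞) := lim_{r→∞} g(r) with 0 < g(∞) < ∞. Then there exists a point x ∈ ℝⁿ such that ∫_{ℝⁿ} v(x+y) f(y) dy = 0. -/

import Mathlib

set_option maxHeartbeats 1000000
set_option synthInstance.maxHeartbeats 400000

open MeasureTheory Filter Set Topology

/-- The radial vector field `v(y) = g(|y|) y/|y|` (with `v(0)=0`). -/
noncomputable def radialField {n : ℕ} (g : ℝ → ℝ)
    (y : EuclideanSpace ℝ (Fin n)) : EuclideanSpace ℝ (Fin n) :=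
  (g ‖y‖ / ‖y‖) • y

section Aux

variable {n : ℕ}

/-- The potential `z ↦ ∫₀^{‖z‖} g` has gradient `radialField g` everywhere. -/
lemma hasFDerivAt_radialPotential (g : ℝ → ℝ) (hg_cont : ContinuousOn g (Ici 0))
    (hg0 : g 0 = 0) (x : EuclideanSpace ℝ (Fin n)) :
    HasFDerivAt (fun z : EuclideanSpace ℝ (Fin n) => ∫ t in (0:ℝ)..‖z‖, g t)
      (innerSL ℝ (radialField g x)) x := by
  by_cases hx : x = 0
  · subst hx
    have hrf : radialField g (0 : EuclideanSpace ℝ (Fin n)) = 0 := by simp [radialField]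
    rw [hrf, map_zero, hasFDerivAt_iff_isLittleO_nhds_zero, Asymptotics.isLittleO_iff]
    intro c hc
    have hev : ∀ᶠ t in 𝓝[Ici 0] (0:ℝ), |g t| < c := by
      have := (hg_cont 0 self_mem_Ici) (Metric.ball_mem_nhds (g 0) hc)
      filter_upwards [this] with t ht
      simpa [hg0, Real.dist_eq] using ht
    obtain ⟨δ, hδ, hδsub⟩ := Metric.mem_nhdsWithin_iff.mp hev
    filter_upwards [Metric.ball_mem_nhds (0 : EuclideanSpace ℝ (Fin n)) hδ] with h hh
    have hnh : ‖h‖ < δ := by simpa using hh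
    have hbound : ∀ t ∈ Set.uIoc (0:ℝ) ‖(0:EuclideanSpace ℝ (Fin n)) + h‖, ‖g t‖ ≤ c := by
      intro t ht
      rw [Set.uIoc_of_le (by positivity)] at ht
      have : t ∈ Metric.ball (0:ℝ) δ ∩ Ici 0 := by
        constructor
        · simp only [Metric.mem_ball, Real.dist_eq, sub_zero]
          rw [abs_of_pos ht.1]
          calc t ≤ ‖(0:EuclideanSpace ℝ (Fin n)) + h‖ := ht.2
            _ = ‖h‖ := by rw [zero_add]
            _ < δ := hnh
        · exact le_of_lt ht.1
      exact le_of_lt (hδsub this)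
    have := intervalIntegral.norm_integral_le_of_norm_le_const hbound
    simp only [zero_add, norm_zero, sub_zero, intervalIntegral.integral_same,
      ContinuousLinearMap.zero_apply] at this ⊢
    calc ‖∫ t in (0:ℝ)..‖h‖, g t‖ ≤ c * |‖h‖ - 0| := by simpa using this
      _ = c * ‖h‖ := by rw [sub_zero, abs_of_nonneg (norm_nonneg _)]
  · have hxpos : (0:ℝ) < ‖x‖ := norm_pos_iff.mpr hx
    -- derivative of norm
    have hsq : HasFDerivAt (fun y : EuclideanSpace ℝ (Fin n) => ‖y‖ ^ 2)
        (2 • (innerSL ℝ x)) x := (hasStrictFDerivAt_norm_sq x).hasFDerivAt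
    have hsqrt : HasDerivAt Real.sqrt (1 / (2 * Real.sqrt (‖x‖ ^ 2))) (‖x‖ ^ 2) :=
      Real.hasDerivAt_sqrt (by positivity)
    have hnorm0 : HasFDerivAt (fun y : EuclideanSpace ℝ (Fin n) => Real.sqrt (‖y‖ ^ 2))
        ((1 / (2 * Real.sqrt (‖x‖ ^ 2))) • (2 • (innerSL ℝ x))) x :=
      hsqrt.comp_hasFDerivAt x hsq
    have hnorm : HasFDerivAt (fun y : EuclideanSpace ℝ (Fin n) => ‖y‖)
        (‖x‖⁻¹ • (innerSL ℝ x)) x := by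
      have heq : (fun y : EuclideanSpace ℝ (Fin n) => Real.sqrt (‖y‖ ^ 2))
          = fun y => ‖y‖ := by
        funext y; rw [Real.sqrt_sq (norm_nonneg y)]
      rw [heq] at hnorm0
      have hs : (1 / (2 * Real.sqrt (‖x‖ ^ 2))) • (2 • (innerSL ℝ x))
          = ‖x‖⁻¹ • (innerSL ℝ x) := by
        rw [Real.sqrt_sq (norm_nonneg x)]
        ext w
        simp only [ContinuousLinearMap.smul_apply, smul_eq_mul, two_smul,
          ContinuousLinearMap.add_apply]
        have : ‖x‖ ≠ 0 := ne_of_gt hxpos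
        field_simp
        ring
      rw [← hs]
      exact hnorm0
    -- derivative of G
    have hGint : IntervalIntegrable g MeasureTheory.volume 0 ‖x‖ := by
      apply ContinuousOn.intervalIntegrable
      apply hg_cont.mono
      intro t ht
      exact le_trans (le_min le_rfl (le_of_lt hxpos)) ht.1
    have hgc : ContinuousAt g ‖x‖ :=
      hg_cont.continuousAt (mem_of_superset (isOpen_Ioi.mem_nhds hxpos) Ioi_subset_Ici_self)
    have hmeas : StronglyMeasurableAtFilter g (𝓝 ‖x‖) := by
      refine ⟨Ioi 0, isOpen_Ioi.mem_nhds hxpos, ?_⟩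
      exact (hg_cont.mono Ioi_subset_Ici_self).aestronglyMeasurable measurableSet_Ioi
    have hG : HasDerivAt (fun r : ℝ => ∫ t in (0:ℝ)..r, g t) (g ‖x‖) ‖x‖ :=
      intervalIntegral.integral_hasDerivAt_right hGint hmeas hgc
    have hfin := hG.comp_hasFDerivAt x hnorm
    have hfinal : (innerSL ℝ) (radialField g x) = g ‖x‖ • ‖x‖⁻¹ • (innerSL ℝ) x := by
      rw [radialField, _root_.map_smul, smul_smul, div_eq_mul_inv]
    rw [hfinal]
    exact hfin

/-- Continuity of the radial field. -/
lemma continuous_radialField (g : ℝ → ℝ) (hg_cont : ContinuousOn g (Ici 0)) (hg0 : g 0 = 0) :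
    Continuous (radialField (n := n) g) := by
  rw [continuous_iff_continuousAt]
  intro z
  by_cases hz : z = 0
  · subst hz
    have h0 : radialField g (0 : EuclideanSpace ℝ (Fin n)) = 0 := by simp [radialField]
    rw [ContinuousAt, h0]
    rw [tendsto_zero_iff_norm_tendsto_zero]
    have hb : ∀ y : EuclideanSpace ℝ (Fin n), ‖radialField g y‖ ≤ |g ‖y‖| := by
      intro y
      rw [radialField, norm_smul]
      by_cases hy : y = 0
      · simp [hy]
      · have : ‖y‖ ≠ 0 := norm_ne_zero_iff.mpr hy
        rw [Real.norm_eq_abs, abs_div, abs_of_nonneg (norm_nonneg y)]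
        rw [div_mul_cancel₀ _ this]
    have hgn : Tendsto (fun y : EuclideanSpace ℝ (Fin n) => |g ‖y‖|)
        (𝓝 0) (𝓝 0) := by
      have h1 : Tendsto (fun y : EuclideanSpace ℝ (Fin n) => ‖y‖) (𝓝 0) (𝓝[Ici 0] 0) := by
        apply tendsto_nhdsWithin_of_tendsto_nhds_of_eventually_within
        · simpa using continuous_norm.tendsto (0 : EuclideanSpace ℝ (Fin n))
        · exact Eventually.of_forall fun y => norm_nonneg y
      have h2 : Tendsto g (𝓝[Ici 0] (0:ℝ)) (𝓝 0) := by
        have := (hg_cont 0 self_mem_Ici).tendsto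
        rwa [hg0] at this
      have := (h2.comp h1).abs
      simpa using this
    exact squeeze_zero_norm (fun y => by simpa using hb y) hgn
  · have hnz : ‖z‖ ≠ 0 := norm_ne_zero_iff.mpr hz
    have hzpos : (0:ℝ) < ‖z‖ := norm_pos_iff.mpr hz
    refine ContinuousAt.smul (f := fun y : EuclideanSpace ℝ (Fin n) => g ‖y‖ / ‖y‖) (g := id) ?_ ?_
    · apply ContinuousAt.div
      · exact (hg_cont.continuousAt
          (mem_of_superset (isOpen_Ioi.mem_nhds hzpos) Ioi_subset_Ici_self)).comp
          continuous_norm.continuousAt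
      · exact continuous_norm.continuousAt
      · exact hnz
    · exact continuousAt_id

end Aux

theorem weinberger_orthogonality_signed_density {n : ℕ} (hn : 1 ≤ n)
    (g : ℝ → ℝ) (hg_cont : ContinuousOn g (Ici 0)) (hg0 : g 0 = 0)
    (ginf : ℝ) (hginf_pos : 0 < ginf) (hg_lim : Tendsto g atTop (𝓝 ginf))
    (f : EuclideanSpace ℝ (Fin n) → ℝ)
    (hf_int : Integrable f) (hf_pos : 0 < ∫ y, f y) :
    ∃ x : EuclideanSpace ℝ (Fin n), ∫ y, f y • radialField g (x + y) = 0 := by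
  classical
  -- a uniform bound on g on [0,∞)
  obtain ⟨R, hR⟩ : ∃ R : ℝ, ∀ r ≥ R, |g r - ginf| < 1 := by
    have := (Metric.tendsto_atTop.mp hg_lim) 1 one_pos
    obtain ⟨R, hR⟩ := this
    exact ⟨R, fun r hr => by simpa [Real.dist_eq] using hR r hr⟩
  set R₀ : ℝ := max R 0 with hR₀def
  obtain ⟨C₀, hC₀⟩ : ∃ C₀ : ℝ, ∀ r ∈ Icc (0:ℝ) R₀, ‖g r‖ ≤ C₀ :=
    (isCompact_Icc).exists_bound_of_continuousOn
      (hg_cont.mono (fun t ht => ht.1))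
  set C : ℝ := max C₀ (|ginf| + 1) + 1 with hCdef
  have hCpos : 0 < C := by
    have : (0:ℝ) ≤ max C₀ (|ginf| + 1) := le_max_of_le_right (by positivity)
    linarith
  have hgC : ∀ r : ℝ, 0 ≤ r → |g r| ≤ C := by
    intro r hr
    by_cases h : r ≤ R₀
    · have := hC₀ r ⟨hr, h⟩
      rw [Real.norm_eq_abs] at this
      calc |g r| ≤ C₀ := this
        _ ≤ max C₀ (|ginf| + 1) := le_max_left _ _
        _ ≤ C := by linarith
    · push_neg at h
      have hrR : r ≥ R := le_trans (le_max_left _ _) (le_of_lt h)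
      have := hR r hrR
      calc |g r| = |(g r - ginf) + ginf| := by ring_nf
        _ ≤ |g r - ginf| + |ginf| := abs_add_le _ _
        _ ≤ 1 + |ginf| := by linarith
        _ ≤ max C₀ (|ginf| + 1) := by rw [add_comm]; exact le_max_right _ _
        _ ≤ C := by linarith
  -- the radial field is bounded by C
  have hvC : ∀ z : EuclideanSpace ℝ (Fin n), ‖radialField g z‖ ≤ C := by
    intro z
    rw [radialField, norm_smul]
    by_cases hz : z = 0
    · simp only [hz, norm_zero, mul_zero]; exact le_of_lt hCpos
    · have hnz : ‖z‖ ≠ 0 := norm_ne_zero_iff.mpr hz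
      rw [Real.norm_eq_abs, abs_div, abs_of_nonneg (norm_nonneg z), div_mul_cancel₀ _ hnz]
      exact hgC _ (norm_nonneg z)
  -- the antiderivative G and potential h
  set G : ℝ → ℝ := fun r => ∫ t in (0:ℝ)..r, g t with hGdef
  have hIntg : ∀ a b : ℝ, 0 ≤ a → 0 ≤ b → IntervalIntegrable g MeasureTheory.volume a b := by
    intro a b ha hb
    apply ContinuousOn.intervalIntegrable
    apply hg_cont.mono
    intro t ht
    exact le_trans (le_min ha hb) ht.1
  -- G is C-Lipschitz on [0,∞)
  have hGlip : ∀ a b : ℝ, 0 ≤ a → 0 ≤ b → |G b - G a| ≤ C * |b - a| := by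
    have key : ∀ a b : ℝ, 0 ≤ a → a ≤ b → |G b - G a| ≤ C * (b - a) := by
      intro a b ha hab
      have hb : (0:ℝ) ≤ b := le_trans ha hab
      have hsplit : G a + ∫ t in a..b, g t = G b :=
        intervalIntegral.integral_add_adjacent_intervals (hIntg 0 a le_rfl ha)
          (hIntg a b ha hb)
      have : G b - G a = ∫ t in a..b, g t := by linarith
      rw [this]
      have := intervalIntegral.norm_integral_le_of_norm_le_const
        (C := C) (f := g) (a := a) (b := b) ?_
      · calc |∫ t in a..b, g t| = ‖∫ t in a..b, g t‖ := (Real.norm_eq_abs _).symm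
          _ ≤ C * |b - a| := this
          _ = C * (b - a) := by rw [abs_of_nonneg (by linarith)]
      · intro t ht
        rw [Set.uIoc_of_le hab] at ht
        exact hgC t (le_trans ha (le_of_lt ht.1))
    intro a b ha hb
    rcases le_total a b with h | h
    · rw [abs_of_nonneg (by linarith : (0:ℝ) ≤ b - a)]
      exact key a b ha h
    · rw [abs_sub_comm, abs_of_nonpos (by linarith : b - a ≤ 0)]
      have := key b a hb h
      linarith [key b a hb h]
  set h : EuclideanSpace ℝ (Fin n) → ℝ := fun z => G ‖z‖ with hhdef
  have hgrad : ∀ x : EuclideanSpace ℝ (Fin n), HasFDerivAt h (innerSL ℝ (radialField g x)) x :=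
    fun x => hasFDerivAt_radialPotential g hg_cont hg0 x
  have hcont : Continuous h := by
    have : Differentiable ℝ h := fun x => (hgrad x).differentiableAt
    exact this.continuous
  have hvcont : Continuous (radialField (n := n) g) := continuous_radialField g hg_cont hg0
  -- difference bound
  have hdiff_bound : ∀ x y : EuclideanSpace ℝ (Fin n), |h (x + y) - h y| ≤ C * ‖x‖ := by
    intro x y
    have := hGlip ‖y‖ ‖x + y‖ (norm_nonneg _) (norm_nonneg _)
    calc |h (x + y) - h y| ≤ C * |‖x + y‖ - ‖y‖| := this
      _ ≤ C * ‖x‖ := by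
          apply mul_le_mul_of_nonneg_left _ (le_of_lt hCpos)
          calc |‖x + y‖ - ‖y‖| ≤ ‖(x + y) - y‖ := abs_norm_sub_norm_le _ _
            _ = ‖x‖ := by rw [add_sub_cancel_right]
  -- the functional W
  set W : EuclideanSpace ℝ (Fin n) → ℝ := fun x => ∫ y, f y * (h (x + y) - h y) with hWdef
  have hmeas_int : ∀ x : EuclideanSpace ℝ (Fin n), AEStronglyMeasurable (fun y => f y * (h (x + y) - h y))
      MeasureTheory.volume := by
    intro x
    have htr : Continuous (fun y : EuclideanSpace ℝ (Fin n) => x + y) := continuous_const.add continuous_id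
    have h2 : Continuous (fun y : EuclideanSpace ℝ (Fin n) => h (x + y) - h y) := (hcont.comp htr).sub hcont
    exact hf_int.aestronglyMeasurable.mul h2.aestronglyMeasurable
  have hWint : ∀ x : EuclideanSpace ℝ (Fin n), Integrable (fun y => f y * (h (x + y) - h y)) := by
    intro x
    apply Integrable.mono' ((hf_int.norm).mul_const (C * ‖x‖)) (hmeas_int x)
    filter_upwards with y
    rw [norm_mul, Real.norm_eq_abs (h (x + y) - h y)]
    exact mul_le_mul_of_nonneg_left (hdiff_bound x y) (norm_nonneg _)
  -- integrability of the vector field integrand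
  have hvint : ∀ x : EuclideanSpace ℝ (Fin n), Integrable (fun y => f y • radialField g (x + y)) := by
    intro x
    have htr : Continuous (fun y : EuclideanSpace ℝ (Fin n) => x + y) := continuous_const.add continuous_id
    apply Integrable.mono' ((hf_int.norm).mul_const C)
    · exact hf_int.aestronglyMeasurable.smul
        ((hvcont.comp htr).aestronglyMeasurable)
    · filter_upwards with y
      rw [norm_smul, Real.norm_eq_abs]
      exact mul_le_mul_of_nonneg_left (hvC _) (abs_nonneg _)
  -- derivative of W
  have hW' : ∀ x₀ : EuclideanSpace ℝ (Fin n), HasFDerivAt W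
      (∫ y, f y • (innerSL ℝ (radialField g (x₀ + y)))) x₀ := by
    intro x₀
    apply hasFDerivAt_integral_of_dominated_of_fderiv_le (s := Metric.ball x₀ 1)
      (F' := fun x y => f y • (innerSL ℝ (radialField g (x + y))))
      (bound := fun y => ‖f y‖ * C) (Metric.ball_mem_nhds x₀ one_pos)
      (Eventually.of_forall fun x => hmeas_int x) (hWint x₀)
    · -- measurability of F' x₀
      exact hf_int.aestronglyMeasurable.smul
        (((innerSL ℝ (E := EuclideanSpace ℝ (Fin n))).continuous.comp
          (hvcont.comp (continuous_const.add continuous_id))).aestronglyMeasurable)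
    · filter_upwards with y x _
      show ‖f y • (innerSL ℝ) (radialField g (x + y))‖ ≤ ‖f y‖ * C
      refine le_trans (ContinuousLinearMap.opNorm_smul_le _ _) ?_
      rw [innerSL_apply_norm]
      exact mul_le_mul_of_nonneg_left (hvC _) (norm_nonneg _)
    · exact (hf_int.norm).mul_const C
    · filter_upwards with y x _
      have h1 : HasFDerivAt (fun x : EuclideanSpace ℝ (Fin n) => h (x + y))
          (innerSL ℝ (radialField g (x + y))) x := by
        have := (hgrad (x + y)).comp x ((hasFDerivAt_id x).add_const y)
        simpa [Function.comp_def] using this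
      have h2 : HasFDerivAt (fun x : EuclideanSpace ℝ (Fin n) => h (x + y) - h y)
          (innerSL ℝ (radialField g (x + y))) x := h1.sub_const (h y)
      exact h2.const_mul (f y)
  have hWdiff : Differentiable ℝ W := fun x => (hW' x).differentiableAt
  -- countably generated cocompact filter
  haveI : (cocompact (EuclideanSpace ℝ (Fin n))).IsCountablyGenerated := by
    rw [← Metric.cobounded_eq_cocompact, ← comap_norm_atTop]
    infer_instance
  -- ratio limit of G
  have h_ratio : Tendsto (fun r : ℝ => G r / r) atTop (𝓝 ginf) := by
    rw [Metric.tendsto_atTop]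
    intro ε hε
    obtain ⟨R₁, hR₁⟩ := Metric.tendsto_atTop.mp hg_lim (ε / 3) (by positivity)
    set R₂ : ℝ := max R₁ 0 with hR₂def
    have hR₂nonneg : (0:ℝ) ≤ R₂ := le_max_right _ _
    set K : ℝ := |G R₂ - ginf * R₂| with hKdef
    have hKnonneg : (0:ℝ) ≤ K := abs_nonneg _
    refine ⟨max (max R₂ 1) (3 * K / ε + 1), fun r hr => ?_⟩
    have hr1 : (1:ℝ) ≤ r := le_trans (le_trans (le_max_right _ _) (le_max_left _ _)) hr
    have hrpos : (0:ℝ) < r := lt_of_lt_of_le one_pos hr1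
    have hrR₂ : R₂ ≤ r := le_trans (le_trans (le_max_left _ _) (le_max_left _ _)) hr
    have hrK : 3 * K / ε + 1 ≤ r := le_trans (le_max_right _ _) hr
    -- bound |G r - ginf * r|
    have hsplit : G R₂ + ∫ t in R₂..r, g t = G r :=
      intervalIntegral.integral_add_adjacent_intervals (hIntg 0 R₂ le_rfl hR₂nonneg)
        (hIntg R₂ r hR₂nonneg (le_of_lt hrpos))
    have htail : |(∫ t in R₂..r, g t) - ginf * (r - R₂)| ≤ ε / 3 * (r - R₂) := by
      have hgi : IntervalIntegrable (fun _ : ℝ => ginf) MeasureTheory.volume R₂ r :=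
        intervalIntegrable_const
      have hsub : (∫ t in R₂..r, g t) - ginf * (r - R₂)
          = ∫ t in R₂..r, (g t - ginf) := by
        rw [intervalIntegral.integral_sub (hIntg R₂ r hR₂nonneg (le_of_lt hrpos)) hgi,
          intervalIntegral.integral_const, smul_eq_mul]
        ring
      rw [hsub]
      have := intervalIntegral.norm_integral_le_of_norm_le_const
        (C := ε / 3) (f := fun t => g t - ginf) (a := R₂) (b := r) ?_
      · calc |∫ t in R₂..r, (g t - ginf)| = ‖∫ t in R₂..r, (g t - ginf)‖ :=
            (Real.norm_eq_abs _).symm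
          _ ≤ ε / 3 * |r - R₂| := this
          _ = ε / 3 * (r - R₂) := by rw [abs_of_nonneg (by linarith)]
      · intro t ht
        rw [Set.uIoc_of_le hrR₂] at ht
        have : t ≥ R₁ := le_trans (le_max_left _ _) (le_of_lt ht.1)
        have := hR₁ t this
        rw [Real.dist_eq] at this
        rw [Real.norm_eq_abs]
        linarith
    have hGr : |G r - ginf * r| ≤ K + ε / 3 * r := by
      have h1 : G r - ginf * r = (G R₂ - ginf * R₂) + ((∫ t in R₂..r, g t) - ginf * (r - R₂)) := by
        rw [← hsplit]; ring
      rw [h1]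
      calc |(G R₂ - ginf * R₂) + ((∫ t in R₂..r, g t) - ginf * (r - R₂))|
          ≤ |G R₂ - ginf * R₂| + |(∫ t in R₂..r, g t) - ginf * (r - R₂)| := abs_add_le _ _
        _ ≤ K + ε / 3 * (r - R₂) := by
            apply add_le_add le_rfl htail
        _ ≤ K + ε / 3 * r := by nlinarith
    rw [Real.dist_eq]
    have hdd : G r / r - ginf = (G r - ginf * r) / r := by
      field_simp
    rw [hdd, abs_div, abs_of_pos hrpos]
    rw [div_lt_iff₀ hrpos]
    have hKr : 3 * K < ε * r := by
      have : ε * r ≥ ε * (3 * K / ε + 1) := by nlinarith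
      have h2 : ε * (3 * K / ε + 1) = 3 * K + ε := by field_simp
      nlinarith
    calc |G r - ginf * r| ≤ K + ε / 3 * r := hGr
      _ < ε * r := by nlinarith
  -- limit of W x / ‖x‖ along cocompact
  set c : ℝ := ginf * ∫ y, f y with hcdef
  have hcpos : 0 < c := mul_pos hginf_pos hf_pos
  have hnormT : Tendsto (fun x : EuclideanSpace ℝ (Fin n) => ‖x‖) (cocompact (EuclideanSpace ℝ (Fin n))) atTop :=
    tendsto_norm_cocompact_atTop
  have hratioW : Tendsto (fun x : EuclideanSpace ℝ (Fin n) => W x / ‖x‖) (cocompact (EuclideanSpace ℝ (Fin n))) (𝓝 c) := by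
    have hWd : ∀ x : EuclideanSpace ℝ (Fin n), W x / ‖x‖
        = ∫ y, f y * (h (x + y) - h y) * (‖x‖)⁻¹ := by
      intro x
      rw [hWdef]
      simp only [div_eq_mul_inv]
      rw [← integral_mul_const]
    have key : Tendsto (fun x : EuclideanSpace ℝ (Fin n) =>
        ∫ y, f y * (h (x + y) - h y) * (‖x‖)⁻¹)
        (cocompact (EuclideanSpace ℝ (Fin n))) (𝓝 (∫ y, f y * ginf)) := by
      apply tendsto_integral_filter_of_dominated_convergence
        (bound := fun y => |f y| * C)
      · filter_upwards with x
        exact (hmeas_int x).mul_const _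
      · filter_upwards [hnormT.eventually_ge_atTop 1] with x hx
        filter_upwards with y
        have hxpos : (0:ℝ) < ‖x‖ := lt_of_lt_of_le one_pos hx
        have hrw : ‖f y * (h (x + y) - h y) * (‖x‖)⁻¹‖
            = |f y| * (|h (x + y) - h y| * (‖x‖)⁻¹) := by
          rw [Real.norm_eq_abs, abs_mul, abs_mul, abs_inv, abs_of_pos hxpos, mul_assoc]
        rw [hrw]
        apply mul_le_mul_of_nonneg_left _ (abs_nonneg _)
        rw [← div_eq_mul_inv, div_le_iff₀ hxpos]
        exact hdiff_bound x y
      · exact (hf_int.norm).mul_const C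
      · filter_upwards with y
        -- pointwise limit
        have hb : Tendsto (fun x : EuclideanSpace ℝ (Fin n) => ‖x + y‖) (cocompact (EuclideanSpace ℝ (Fin n))) atTop := by
          apply tendsto_atTop_mono' _ _ (tendsto_atTop_add_const_right _ (-‖y‖) hnormT)
          filter_upwards with x
          have : ‖x‖ ≤ ‖x + y‖ + ‖y‖ := by
            calc ‖x‖ = ‖(x + y) - y‖ := by rw [add_sub_cancel_right]
              _ ≤ ‖x + y‖ + ‖y‖ := norm_sub_le _ _
          linarith
        have t1 : Tendsto (fun x : EuclideanSpace ℝ (Fin n) => G ‖x + y‖ / ‖x + y‖) (cocompact (EuclideanSpace ℝ (Fin n))) (𝓝 ginf) :=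
          h_ratio.comp hb
        have hinv : Tendsto (fun x : EuclideanSpace ℝ (Fin n) => (‖x‖)⁻¹) (cocompact (EuclideanSpace ℝ (Fin n))) (𝓝 0) :=
          hnormT.inv_tendsto_atTop
        have t2 : Tendsto (fun x : EuclideanSpace ℝ (Fin n) => ‖x + y‖ / ‖x‖) (cocompact (EuclideanSpace ℝ (Fin n))) (𝓝 1) := by
          have hz : Tendsto (fun x : EuclideanSpace ℝ (Fin n) => ‖x + y‖ / ‖x‖ - 1) (cocompact (EuclideanSpace ℝ (Fin n))) (𝓝 0) := by
            refine squeeze_zero_norm' (a := fun x : EuclideanSpace ℝ (Fin n) => ‖y‖ * (‖x‖)⁻¹) ?_ ?_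
            · filter_upwards [hnormT.eventually_ge_atTop 1] with x hx
              have hxpos : (0:ℝ) < ‖x‖ := lt_of_lt_of_le one_pos hx
              have : ‖x + y‖ / ‖x‖ - 1 = (‖x + y‖ - ‖x‖) / ‖x‖ := by field_simp
              rw [this, Real.norm_eq_abs, abs_div, abs_of_pos hxpos, div_eq_mul_inv]
              apply mul_le_mul_of_nonneg_right _ (by positivity)
              calc |‖x + y‖ - ‖x‖| ≤ ‖(x + y) - x‖ := abs_norm_sub_norm_le _ _
                _ = ‖y‖ := by rw [add_sub_cancel_left]
            · simpa using hinv.const_mul ‖y‖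
          have := hz.add_const 1
          simp only [zero_add] at this
          convert this using 1
          funext x; ring
        have t3 : Tendsto (fun x : EuclideanSpace ℝ (Fin n) => G ‖y‖ / ‖x‖) (cocompact (EuclideanSpace ℝ (Fin n))) (𝓝 0) := by
          simp only [div_eq_mul_inv]
          simpa using hinv.const_mul (G ‖y‖)
        have tmain : Tendsto (fun x : EuclideanSpace ℝ (Fin n) => (h (x + y) - h y) / ‖x‖) (cocompact (EuclideanSpace ℝ (Fin n))) (𝓝 ginf) := by
          have heq : ∀ᶠ x : EuclideanSpace ℝ (Fin n) in cocompact (EuclideanSpace ℝ (Fin n)),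
              (h (x + y) - h y) / ‖x‖
                = (G ‖x + y‖ / ‖x + y‖) * (‖x + y‖ / ‖x‖) - G ‖y‖ / ‖x‖ := by
            filter_upwards [hb.eventually_ge_atTop 1, hnormT.eventually_ge_atTop 1] with x h1 h2
            have hb0 : ‖x + y‖ ≠ 0 := by positivity
            have hx0 : ‖x‖ ≠ 0 := by positivity
            show (G ‖x + y‖ - G ‖y‖) / ‖x‖ = _
            field_simp
          refine Tendsto.congr' (EventuallyEq.symm heq) ?_
          have := (t1.mul t2).sub t3
          simpa using this
        have := tmain.const_mul (f y)
        simpa [div_eq_mul_inv, mul_assoc, mul_div_assoc] using this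
    have : (∫ y, f y * ginf) = c := by
      rw [hcdef, integral_mul_const, mul_comm]
    rw [← this]
    refine key.congr fun x => ?_
    exact (hWd x).symm
  -- coercivity
  have hcoer : Tendsto W (cocompact (EuclideanSpace ℝ (Fin n))) atTop := by
    have hev : ∀ᶠ x : EuclideanSpace ℝ (Fin n) in cocompact (EuclideanSpace ℝ (Fin n)), c / 2 * ‖x‖ ≤ W x := by
      filter_upwards [hratioW.eventually (eventually_gt_nhds (half_lt_self hcpos)),
        hnormT.eventually_ge_atTop 1] with x hx1 hx2
      have hxpos : (0:ℝ) < ‖x‖ := lt_of_lt_of_le one_pos hx2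
      exact le_of_lt ((lt_div_iff₀ hxpos).mp hx1)
    exact tendsto_atTop_mono' _ hev (Tendsto.const_mul_atTop (half_pos hcpos) hnormT)
  -- minimizer
  obtain ⟨x₀, hx₀⟩ := hWdiff.continuous.exists_forall_le hcoer
  have hmin : IsLocalMin W x₀ := Filter.Eventually.of_forall hx₀
  have hzero : (∫ y, f y • (innerSL ℝ (radialField g (x₀ + y)))) = 0 :=
    hmin.hasFDerivAt_eq_zero (hW' x₀)
  refine ⟨x₀, ?_⟩
  set I : EuclideanSpace ℝ (Fin n) := ∫ y, f y • radialField g (x₀ + y) with hIdef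
  have hcomm : (∫ y, innerSL ℝ (f y • radialField g (x₀ + y))) = innerSL ℝ I :=
    (innerSL ℝ (E := EuclideanSpace ℝ (Fin n))).integral_comp_comm (hvint x₀)
  have heq : (fun y => innerSL ℝ (f y • radialField g (x₀ + y)))
      = fun y => f y • innerSL ℝ (radialField g (x₀ + y)) := by
    funext y
    exact _root_.map_smul _ _ _
  have hI0 : innerSL ℝ I = 0 := by
    rw [← hcomm, heq, hzero]
  have : (inner ℝ I I : ℝ) = 0 := by
    have := congrArg (fun T : (EuclideanSpace ℝ (Fin n)) →L[ℝ] ℝ => T I) hI0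
    simpa using this
  exact inner_self_eq_zero.mp this
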